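/- For any linear functional ζ on C_k that belongs to ker ∂_k^* (identified with a k-cycle via the Hilbert space isomorphism) and any k-chain σ, the generator of the cycle-valued random walk satisfies A ζ(σ) = -L_k^↑ ζ(σ), where A ζ(σ) = Σ_{τ ∈ S_{k+1}} (ζ(σ - ∂_{k+1}τ) - ζ(σ)) · ⟨∂_{k+1}τ, σ⟩^+ and L_k^↑ = ∂_{k+1} ∂_{k+1}^*. -/
import Mathlib


open scoped RealInnerProductSpace

/-- The generator of the cycle-valued random walk coincides with minus the up-Laplacian on
cochains that are cycles.  `E` plays the role of the Hilbert space `C_k` of `k`-chains,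
`F` that of `C_{k-1}`, `dk : E →ₗ[ℝ] F` is the boundary map `∂_k`, `S` indexes the
positively oriented `(k+1)`-simplexes and `bd τ = ∂_{k+1} τ`.  The sum over all oriented
`(k+1)`-simplexes (both orientations `±τ`) of
`(ζ(σ - ∂_{k+1}τ) - ζ(σ)) ⟨∂_{k+1}τ, σ⟩⁺`, with `ζ = ⟪z, ·⟫` a linear functional
represented by the `k`-cycle `z`, equals `-L_k^↑ ζ(σ) = -⟪z, ∂_{k+1}∂_{k+1}^* σ⟫`. -/
theorem generator_eq_neg_up_laplacian
    {E F : Type*} [NormedAddCommGroup E] [InnerProductSpace ℝ E]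
    [NormedAddCommGroup F] [InnerProductSpace ℝ F]
    {S : Type*} [Fintype S] (bd : S → E)
    (dk : E →ₗ[ℝ] F) (z : E) (hz : dk z = 0) (σ : E) :
    (∑ τ : S, ((⟪z, σ - bd τ⟫ - ⟪z, σ⟫) * max ⟪bd τ, σ⟫ 0
        + (⟪z, σ - (-(bd τ))⟫ - ⟪z, σ⟫) * max ⟪-(bd τ), σ⟫ 0))
      = - ⟪z, ∑ τ : S, ⟪bd τ, σ⟫ • bd τ⟫ := by
  rw [inner_sum, ← Finset.sum_neg_distrib]
  refine Finset.sum_congr rfl fun τ _ => ?_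
  have h : max ⟪bd τ, σ⟫ 0 - max (-⟪bd τ, σ⟫) 0 = ⟪bd τ, σ⟫ :=
    max_zero_sub_max_neg_zero_eq_self _
  simp only [inner_sub_right, inner_neg_right, inner_neg_left, inner_smul_right]
  linear_combination (-⟪z, bd τ⟫) * h
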